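/- Let d ≥ 1, σ > 0, q ∈ (0, 1], r ≥ 0, a ∈ ℝ, and u₁, u₂ ∈ ℝ^d with ‖u₁ − u₂‖₂ ≤ r. Let Y′ be the mixture measure on ℝ^d with density (1 − q)·φ_{u₁,σ,d} + q·φ_{u₂,σ,d}, and let W be the one-dimensional mixture with density (1 − q)·φ_{0,σ,1} + q·φ_{r,σ,1}. Then TV_a( N(u₁, σ²I_d), Y′ ) ≤ TV_a( N(0, σ²), W ); that is, a single subsampled Gaussian step is no more distinguishable under TV_a than the worst-case one-dimensional subsampled Gaussian step at distance r. -/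

import Mathlib

/-!
Writing `f - a ((1 - q) f + q g) = α f - β g`, both sides are integrals `∫ |α φ_{u₁} - β φ_{u₂}|`.
By translation and rotation invariance of Lebesgue measure, the `d`-dimensional integral only
depends on `t = ‖u₂ - u₁‖`; putting `u₂ - u₁` on a coordinate axis and integrating out the other
coordinates (Fubini) turns it into the one-dimensional `∫ |α φ_0 - β φ_t|`. This is monotone in
`t ≥ 0`. After normalising `β ≥ 0` it equals `2 ∫ (β φ_t - α φ_0)⁺ - (β - α)`, and the positive
part is the integral over `{β φ_t ≥ α φ_0}`. That set is an upper set, since the likelihood ratio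
`φ_t / φ_0` is increasing, and the `φ_t`-mass of an upper set increases with `t`.
-/

open MeasureTheory

/-- `TV_a(X, Y) = (1/2) ∫ |f(x) − a·g(x)| dx` for densities `f, g`. -/
noncomputable def TVa {E : Type*} [MeasureSpace E] (a : ℝ) (f g : E → ℝ) : ℝ :=
  (1 / 2) * ∫ x, |f x - a * g x|

/-- Density of the isotropic Gaussian `N(u, σ²I_d)` on `ℝ^d`. -/
noncomputable def gaussDensity (d : ℕ) (σ : ℝ) (u : EuclideanSpace ℝ (Fin d))
    (x : EuclideanSpace ℝ (Fin d)) : ℝ :=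
  (2 * Real.pi * σ ^ 2) ^ (-(d : ℝ) / 2) * Real.exp (-‖x - u‖ ^ 2 / (2 * σ ^ 2))

/-- Density of the one-dimensional Gaussian `N(u, σ²)` on `ℝ`. -/
noncomputable def gauss1 (σ u : ℝ) (x : ℝ) : ℝ :=
  (2 * Real.pi * σ ^ 2) ^ (-(1 : ℝ) / 2) * Real.exp (-(x - u) ^ 2 / (2 * σ ^ 2))

open ProbabilityTheory

lemma gauss1_eq_gaussianPDFReal (σ u : ℝ) : gauss1 σ u = gaussianPDFReal u (σ ^ 2).toNNReal := by
  rw [gaussianPDFReal_def]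
  ext x
  have h : (0 : ℝ) ≤ 2 * Real.pi * σ ^ 2 := by positivity
  rw [gauss1, Real.coe_toNNReal _ (sq_nonneg σ), neg_div, Real.rpow_neg h, ← Real.sqrt_eq_rpow]

lemma gauss1_pos {σ : ℝ} (hσ : 0 < σ) (u x : ℝ) : 0 < gauss1 σ u x := by
  rw [gauss1_eq_gaussianPDFReal]
  exact gaussianPDFReal_pos _ _ _ (Real.toNNReal_pos.2 (pow_pos hσ 2)).ne'

lemma integrable_gauss1 (σ u : ℝ) : Integrable (gauss1 σ u) := by
  rw [gauss1_eq_gaussianPDFReal]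
  exact integrable_gaussianPDFReal _ _

lemma measurable_gauss1 (σ u : ℝ) : Measurable (gauss1 σ u) := by
  rw [gauss1_eq_gaussianPDFReal]
  exact measurable_gaussianPDFReal _ _

lemma integral_gauss1 {σ : ℝ} (hσ : 0 < σ) (u : ℝ) : ∫ x, gauss1 σ u x = 1 := by
  rw [gauss1_eq_gaussianPDFReal]
  exact integral_gaussianPDFReal_eq_one _ (Real.toNNReal_pos.2 (pow_pos hσ 2)).ne'

lemma gauss1_add_self (σ u x : ℝ) : gauss1 σ u (x + u) = gauss1 σ 0 x := by
  simp [gauss1]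

lemma gauss1_eq_mul_exp (σ t x : ℝ) :
    gauss1 σ t x = gauss1 σ 0 x * Real.exp ((2 * t * x - t ^ 2) / (2 * σ ^ 2)) := by
  rw [gauss1, gauss1, mul_assoc _ (Real.exp _), ← Real.exp_add]
  congr 2
  ring

lemma isUpperSet_setOf_nonneg_sub_gauss1 {σ : ℝ} (hσ : 0 < σ) (α : ℝ) {β t : ℝ} (hβ : 0 ≤ β)
    (ht : 0 ≤ t) : IsUpperSet {x | 0 ≤ β * gauss1 σ t x - α * gauss1 σ 0 x} := by
  intro x y hxy hx
  simp only [Set.mem_ofPred_eq, sub_nonneg, gauss1_eq_mul_exp σ t] at hx ⊢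
  have hratio : α ≤ β * Real.exp ((2 * t * x - t ^ 2) / (2 * σ ^ 2)) := by
    nlinarith [gauss1_pos hσ 0 x]
  have hmono : Real.exp ((2 * t * x - t ^ 2) / (2 * σ ^ 2))
      ≤ Real.exp ((2 * t * y - t ^ 2) / (2 * σ ^ 2)) := by
    gcongr
  nlinarith [gauss1_pos hσ 0 y, mul_le_mul_of_nonneg_left hmono hβ]

lemma setIntegral_gauss1_mono {σ : ℝ} (hσ : 0 < σ) {s : Set ℝ} (hs : IsUpperSet s) {t r : ℝ}
    (htr : t ≤ r) : ∫ x in s, gauss1 σ t x ≤ ∫ x in s, gauss1 σ r x := by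
  have hshift : ∀ u, ∫ x in s, gauss1 σ u x = ∫ x in (· + u) ⁻¹' s, gauss1 σ 0 x := fun u => by
    rw [← (measurePreserving_add_right volume u).setIntegral_preimage_emb
      (measurableEmbedding_addRight u)]
    simp only [gauss1_add_self]
  rw [hshift, hshift]
  refine setIntegral_mono_set (integrable_gauss1 σ 0).integrableOn
    (ae_of_all _ fun x => (gauss1_pos hσ 0 x).le) (Filter.Eventually.of_forall fun x hx => ?_)
  exact hs (by simpa using htr) hx

lemma integral_posPart_eq_setIntegral_nonneg {X : Type*} [MeasurableSpace X] {μ : Measure X}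
    {f : X → ℝ} (hf : Measurable f) : ∫ x, (f x)⁺ ∂μ = ∫ x in {x | 0 ≤ f x}, f x ∂μ := by
  rw [← integral_indicator (measurableSet_le measurable_const hf)]
  congr 1 with x
  by_cases hx : 0 ≤ f x
  · simp [hx]
  · simp [hx, posPart_eq_zero.2 (not_le.1 hx).le]

lemma integral_posPart_sub_gauss1_mono {σ : ℝ} (hσ : 0 < σ) (α : ℝ) {β t r : ℝ} (hβ : 0 ≤ β)
    (ht : 0 ≤ t) (htr : t ≤ r) :
    ∫ x, (β * gauss1 σ t x - α * gauss1 σ 0 x)⁺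
      ≤ ∫ x, (β * gauss1 σ r x - α * gauss1 σ 0 x)⁺ := by
  have hmeas : ∀ u, Measurable fun x => β * gauss1 σ u x - α * gauss1 σ 0 x := fun u =>
    ((measurable_gauss1 σ u).const_mul β).sub ((measurable_gauss1 σ 0).const_mul α)
  have hint : ∀ u, Integrable fun x => β * gauss1 σ u x - α * gauss1 σ 0 x := fun u =>
    ((integrable_gauss1 σ u).const_mul β).sub ((integrable_gauss1 σ 0).const_mul α)
  have hsplit : ∀ u (s : Set ℝ), ∫ x in s, (β * gauss1 σ u x - α * gauss1 σ 0 x)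
      = β * (∫ x in s, gauss1 σ u x) - α * ∫ x in s, gauss1 σ 0 x := fun u s => by
    rw [integral_sub ((integrable_gauss1 σ u).const_mul β).integrableOn
      ((integrable_gauss1 σ 0).const_mul α).integrableOn, integral_const_mul, integral_const_mul]
  set S := {x | 0 ≤ β * gauss1 σ t x - α * gauss1 σ 0 x}
  calc ∫ x, (β * gauss1 σ t x - α * gauss1 σ 0 x)⁺
      = β * (∫ x in S, gauss1 σ t x) - α * ∫ x in S, gauss1 σ 0 x := by
        rw [integral_posPart_eq_setIntegral_nonneg (hmeas t), hsplit]
    _ ≤ β * (∫ x in S, gauss1 σ r x) - α * ∫ x in S, gauss1 σ 0 x := by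
        have hS := setIntegral_gauss1_mono hσ (isUpperSet_setOf_nonneg_sub_gauss1 hσ α hβ ht) htr
        gcongr
    _ ≤ ∫ x in {x | 0 ≤ β * gauss1 σ r x - α * gauss1 σ 0 x},
          (β * gauss1 σ r x - α * gauss1 σ 0 x) := by
        rw [← hsplit]
        exact setIntegral_le_nonneg (measurableSet_le measurable_const (hmeas t))
          (hmeas r).stronglyMeasurable (hint r)
    _ = ∫ x, (β * gauss1 σ r x - α * gauss1 σ 0 x)⁺ :=
        (integral_posPart_eq_setIntegral_nonneg (hmeas r)).symm

lemma integral_abs_sub_gauss1_eq {σ : ℝ} (hσ : 0 < σ) (α β t : ℝ) :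
    ∫ x, |α * gauss1 σ 0 x - β * gauss1 σ t x|
      = 2 * (∫ x, (β * gauss1 σ t x - α * gauss1 σ 0 x)⁺) - (β - α) := by
  have hint : Integrable fun x => β * gauss1 σ t x - α * gauss1 σ 0 x :=
    ((integrable_gauss1 σ t).const_mul β).sub ((integrable_gauss1 σ 0).const_mul α)
  simp_rw [abs_sub_comm (α * _)]
  rw [integral_abs_eq_two_mul_integral_posPart_sub_integral hint,
    integral_sub ((integrable_gauss1 σ t).const_mul β) ((integrable_gauss1 σ 0).const_mul α),
    integral_const_mul, integral_const_mul, integral_gauss1 hσ, integral_gauss1 hσ, mul_one,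
    mul_one]

lemma integral_abs_sub_gauss1_mono {σ : ℝ} (hσ : 0 < σ) (α β : ℝ) {t r : ℝ} (ht : 0 ≤ t)
    (htr : t ≤ r) :
    ∫ x, |α * gauss1 σ 0 x - β * gauss1 σ t x|
      ≤ ∫ x, |α * gauss1 σ 0 x - β * gauss1 σ r x| := by
  wlog hβ : 0 ≤ β generalizing α β
  · have hneg : ∀ u, ∫ x, |α * gauss1 σ 0 x - β * gauss1 σ u x|
        = ∫ x, |-α * gauss1 σ 0 x - -β * gauss1 σ u x| := fun u => by
      congr 1 with x
      rw [← abs_neg]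
      ring_nf
    rw [hneg, hneg]
    exact this (-α) (-β) (by linarith)
  rw [integral_abs_sub_gauss1_eq hσ, integral_abs_sub_gauss1_eq hσ]
  linarith [integral_posPart_sub_gauss1_mono hσ α hβ ht htr]

open Finset

lemma EuclideanSpace.integral_mul_prod_erase {ι : Type*} [Fintype ι] [DecidableEq ι] (i₀ : ι)
    (f g : ℝ → ℝ) (hg : ∫ y, g y = 1) :
    ∫ x : EuclideanSpace ℝ ι, f (x i₀) * ∏ i ∈ univ.erase i₀, g (x i) = ∫ y, f y := by
  set k : ι → ℝ → ℝ := Function.update (fun _ => g) i₀ f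
  have hk : ∀ y : ι → ℝ, ∏ i, k i (y i) = f (y i₀) * ∏ i ∈ univ.erase i₀, g (y i) := fun y => by
    rw [← mul_prod_erase _ _ (mem_univ i₀)]
    congr 1
    · simp [k]
    · exact prod_congr rfl fun i hi => by simp [k, ne_of_mem_erase hi]
  rw [← (PiLp.volume_preserving_toLp ι).integral_comp
    (MeasurableEquiv.toLp 2 (ι → ℝ)).measurableEmbedding]
  simp only [← hk]
  rw [integral_fintype_prod_volume_eq_prod, ← mul_prod_erase _ _ (mem_univ i₀),
    prod_congr rfl fun i hi => show ∫ y, k i y = 1 by simp [k, ne_of_mem_erase hi, hg]]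
  simp [k]

section GaussDensity

variable {d : ℕ} {σ : ℝ}

lemma gaussDensity_eq_prod (u x : EuclideanSpace ℝ (Fin d)) :
    gaussDensity d σ u x = ∏ i, gauss1 σ (u i) (x i) := by
  have hpow : (2 * Real.pi * σ ^ 2) ^ (-(d : ℝ) / 2)
      = ∏ _i : Fin d, (2 * Real.pi * σ ^ 2) ^ (-(1 : ℝ) / 2) := by
    rw [prod_const, card_univ, Fintype.card_fin,
      ← Real.rpow_natCast ((2 * Real.pi * σ ^ 2) ^ (-(1 : ℝ) / 2)) d,
      ← Real.rpow_mul (by positivity)]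
    ring_nf
  have hexp : -‖x - u‖ ^ 2 / (2 * σ ^ 2) = ∑ i, -(x i - u i) ^ 2 / (2 * σ ^ 2) := by
    simp [EuclideanSpace.norm_sq_eq, ← sum_div, sum_neg_distrib]
  rw [gaussDensity, hpow, hexp, Real.exp_sum, ← prod_mul_distrib]
  rfl

lemma gaussDensity_add_right (u v x : EuclideanSpace ℝ (Fin d)) :
    gaussDensity d σ u (x + v) = gaussDensity d σ (u - v) x := by
  rw [gaussDensity, gaussDensity, sub_sub_eq_add_sub]

lemma gaussDensity_map (O : EuclideanSpace ℝ (Fin d) ≃ₗᵢ[ℝ] EuclideanSpace ℝ (Fin d))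
    (u x : EuclideanSpace ℝ (Fin d)) : gaussDensity d σ (O u) (O x) = gaussDensity d σ u x := by
  rw [gaussDensity, gaussDensity, ← map_sub, LinearIsometryEquiv.norm_map]

lemma integral_comp_gaussDensity_eq_sub (F : ℝ → ℝ → ℝ) (u₁ u₂ : EuclideanSpace ℝ (Fin d)) :
    ∫ x, F (gaussDensity d σ u₁ x) (gaussDensity d σ u₂ x)
      = ∫ x, F (gaussDensity d σ 0 x) (gaussDensity d σ (u₂ - u₁) x) := by
  rw [← integral_add_right_eq_self _ u₁]
  simp only [gaussDensity_add_right, sub_self]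

lemma integral_comp_gaussDensity_eq_of_norm_eq (F : ℝ → ℝ → ℝ) {v w : EuclideanSpace ℝ (Fin d)}
    (h : ‖v‖ = ‖w‖) :
    ∫ x, F (gaussDensity d σ 0 x) (gaussDensity d σ v x)
      = ∫ x, F (gaussDensity d σ 0 x) (gaussDensity d σ w x) := by
  set O := Submodule.reflection (ℝ ∙ (w - v))ᗮ
  have hO : O w = v := Submodule.reflection_sub h.symm
  rw [← O.measurePreserving.integral_comp O.toHomeomorph.measurableEmbedding]
  have h0 : ∀ x, gaussDensity d σ 0 (O x) = gaussDensity d σ 0 x := fun x => by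
    simpa using gaussDensity_map O 0 x
  congr 1 with x
  rw [← hO]
  simp only [h0, gaussDensity_map]

lemma gaussDensity_single (i : Fin d) (t : ℝ) (x : EuclideanSpace ℝ (Fin d)) :
    gaussDensity d σ (EuclideanSpace.single i t) x
      = gauss1 σ t (x i) * ∏ j ∈ univ.erase i, gauss1 σ 0 (x j) := by
  rw [gaussDensity_eq_prod, ← mul_prod_erase _ _ (mem_univ i)]
  congr 1
  · simp
  · exact prod_congr rfl fun j hj => by simp [ne_of_mem_erase hj]

lemma integral_abs_sub_gaussDensity_single (hσ : 0 < σ) (α β : ℝ) (i : Fin d) (t : ℝ) :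
    ∫ x, |α * gaussDensity d σ 0 x - β * gaussDensity d σ (EuclideanSpace.single i t) x|
      = ∫ y, |α * gauss1 σ 0 y - β * gauss1 σ t y| := by
  rw [← EuclideanSpace.integral_mul_prod_erase i _ _ (integral_gauss1 hσ 0)]
  congr 1 with x
  have hprod : 0 ≤ ∏ j ∈ univ.erase i, gauss1 σ 0 (x j) :=
    prod_nonneg fun j _ => (gauss1_pos hσ 0 (x j)).le
  have hzero : (0 : EuclideanSpace ℝ (Fin d)) = EuclideanSpace.single i 0 :=
    ((PiLp.single_eq_zero_iff 2 i).2 rfl).symm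
  rw [hzero, gaussDensity_single, gaussDensity_single, ← mul_assoc, ← mul_assoc, ← sub_mul,
    abs_mul, abs_of_nonneg hprod]

lemma integral_abs_sub_gaussDensity (hd : 1 ≤ d) (hσ : 0 < σ) (α β : ℝ)
    (u₁ u₂ : EuclideanSpace ℝ (Fin d)) :
    ∫ x, |α * gaussDensity d σ u₁ x - β * gaussDensity d σ u₂ x|
      = ∫ y, |α * gauss1 σ 0 y - β * gauss1 σ ‖u₂ - u₁‖ y| := by
  have hnorm : ‖u₂ - u₁‖ = ‖EuclideanSpace.single (⟨0, hd⟩ : Fin d) ‖u₂ - u₁‖‖ := by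
    rw [PiLp.norm_single, norm_norm]
  rw [integral_comp_gaussDensity_eq_sub (fun a b => |α * a - β * b|),
    integral_comp_gaussDensity_eq_of_norm_eq (fun a b => |α * a - β * b|) hnorm,
    integral_abs_sub_gaussDensity_single hσ]

end GaussDensity

theorem tva_subsampled_step_le_general (d : ℕ) (hd : 1 ≤ d) (σ q r a : ℝ) (hσ : 0 < σ)
    (u₁ u₂ : EuclideanSpace ℝ (Fin d)) (hu : ‖u₁ - u₂‖ ≤ r) :
    TVa a (gaussDensity d σ u₁)
        (fun x => (1 - q) * gaussDensity d σ u₁ x + q * gaussDensity d σ u₂ x)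
      ≤ TVa a (gauss1 σ 0) (fun x => (1 - q) * gauss1 σ 0 x + q * gauss1 σ r x) := by
  have hmix : ∀ f g : ℝ, f - a * ((1 - q) * f + q * g) = (1 - a * (1 - q)) * f - a * q * g :=
    fun f g => by ring
  simp only [TVa, hmix]
  rw [integral_abs_sub_gaussDensity hd hσ]
  refine mul_le_mul_of_nonneg_left ?_ (by norm_num)
  exact integral_abs_sub_gauss1_mono hσ _ _ (norm_nonneg _) (by rwa [norm_sub_rev])

/-- A single subsampled Gaussian step is no more distinguishable under `TV_a` than the
worst-case one-dimensional subsampled Gaussian step at distance `r`. -/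
theorem tva_subsampled_step_le (d : ℕ) (hd : 1 ≤ d) (σ q r a : ℝ) (hσ : 0 < σ)
    (hq : q ∈ Set.Ioc (0 : ℝ) 1) (hr : 0 ≤ r)
    (u₁ u₂ : EuclideanSpace ℝ (Fin d)) (hu : ‖u₁ - u₂‖ ≤ r) :
    TVa a (gaussDensity d σ u₁)
        (fun x => (1 - q) * gaussDensity d σ u₁ x + q * gaussDensity d σ u₂ x)
      ≤ TVa a (gauss1 σ 0) (fun x => (1 - q) * gauss1 σ 0 x + q * gauss1 σ r x) :=
  tva_subsampled_step_le_general d hd σ q r a hσ u₁ u₂ hu
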